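/- Let H = 3/4 and ρ(r) = (1/2)(|r+1|^{3/2} + |r−1|^{3/2} − 2|r|^{3/2}), and σ_n² = 2 ∑_{k,l=0}^{n−1} ρ(k−l)². Then σ_n²/(n log n) → 9/16 as n → ∞. -/

import Mathlib

open Filter Real

/-- The increment covariance function of fractional Brownian motion with `H = 3/4`. -/
noncomputable def rho34 (r : ℤ) : ℝ :=
    (1 / 2 : ℝ) * (|(r : ℝ) + 1| ^ ((3 : ℝ) / 2) + |(r : ℝ) - 1| ^ ((3 : ℝ) / 2)
      - 2 * |(r : ℝ)| ^ ((3 : ℝ) / 2))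

/-!
Splitting the double sum along its diagonals gives `σ_n² = 4 ∑_{r<n} (n - r) ρ(r)² - 2n`.
Rationalizing the second difference of `x ^ (3/2)` shows `√r ρ(r) → 3/8`, so `ρ(r)² ~ 9/(64 r)`.
For any sequence with `r a_r → L`, comparison with the harmonic numbers gives
`∑_{r<n} a_r ~ L log n`, while `n⁻¹ ∑_{r<n} r a_r → L` by Cesàro, which is `o(log n)`;
hence `∑_{r<n} (n - r) a_r ~ L n log n`, and `σ_n² ~ 4 · (9/64) n log n`.
-/

open Finset Asymptotics Topology

theorem sum_range_sum_range_sub_of_even {R : Type*} [CommRing R] {f : ℤ → R} (hf : f.Even)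
    (n : ℕ) :
    ∑ k ∈ range n, ∑ l ∈ range n, f (k - l)
      = 2 * ∑ r ∈ range n, ((n : R) - r) * f r - n * f 0 := by
  induction n with
  | zero => simp
  | succ n ih =>
    have hrow : ∑ l ∈ range n, f (n - l) = ∑ j ∈ range n, f (j + 1) := by
      rw [← sum_range_reflect]
      refine sum_congr rfl fun j hj => congrArg f ?_
      have hjn := mem_range.mp hj
      rw [Nat.cast_sub (by omega), Nat.cast_sub (by omega)]
      ring
    have hcol : ∑ k ∈ range n, f (k - n) = ∑ j ∈ range n, f (j + 1) := by
      rw [← hrow]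
      exact sum_congr rfl fun k _ => by rw [← hf, neg_sub]
    have hshift : ∑ j ∈ range n, f (j + 1) + f 0 = ∑ r ∈ range n, f r + f n := by
      rw [← sum_range_succ, sum_range_succ' (fun r : ℕ => f r)]
      push_cast
      rfl
    have hweight : ∑ r ∈ range n, ((n + 1 : R) - r) * f r
        = ∑ r ∈ range n, ((n : R) - r) * f r + ∑ r ∈ range n, f r := by
      rw [← sum_add_distrib]
      exact sum_congr rfl fun r _ => by ring
    simp only [sum_range_succ, sum_add_distrib, sub_self, hrow, hcol, ih]
    push_cast
    rw [hweight]
    linear_combination 2 * hshift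

theorem tendsto_log_natCast_atTop : Tendsto (fun n : ℕ => log n) atTop atTop :=
  tendsto_log_atTop.comp tendsto_natCast_atTop_atTop

theorem isEquivalent_harmonic_log :
    (fun n : ℕ => (harmonic n : ℝ)) ~[atTop] fun n => log n := by
  have hlog : Tendsto (fun n : ℕ => ‖log n‖) atTop atTop :=
    tendsto_norm_atTop_atTop.comp tendsto_log_natCast_atTop
  exact (tendsto_harmonic_sub_log.isBigO_one ℝ).trans_isLittleO
    (isLittleO_one_left_iff ℝ |>.mpr hlog)

theorem tendsto_sum_range_div_log_of_tendsto_mul {a : ℕ → ℝ} {L : ℝ}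
    (h : Tendsto (fun r : ℕ => r * a r) atTop (𝓝 L)) :
    Tendsto (fun n : ℕ => (∑ r ∈ range n, a r) / log n) atTop (𝓝 L) := by
  have ha : Tendsto a atTop (𝓝 0) := by
    have := h.mul (tendsto_inv_atTop_zero.comp tendsto_natCast_atTop_atTop)
    rw [mul_zero] at this
    refine this.congr' ?_
    filter_upwards [eventually_ne_atTop 0] with r hr
    simp only [Function.comp_apply]
    field_simp
  have hterm :
      (fun r : ℕ => a r - L * ((r : ℝ) + 1)⁻¹) =o[atTop] fun r => ((r : ℝ) + 1)⁻¹ := by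
    rw [isLittleO_iff_tendsto fun r hr => absurd hr (by positivity)]
    have := (h.add ha).sub_const L
    rw [add_zero, sub_self] at this
    refine this.congr fun r => ?_
    field_simp
  have hharm (n : ℕ) : ∑ r ∈ range n, ((r : ℝ) + 1)⁻¹ = harmonic n := by
    simp [harmonic]
  have hsum : (fun n : ℕ => ∑ r ∈ range n, a r - L * harmonic n) =o[atTop]
      fun n => (harmonic n : ℝ) := by
    have := hterm.sum_range (fun r => by positivity) ?_
    · simpa only [sum_sub_distrib, ← mul_sum, hharm] using this
    · simpa only [hharm] using isEquivalent_harmonic_log.symm.tendsto_atTop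
        tendsto_log_natCast_atTop
  have hmain :
      (fun n : ℕ => ∑ r ∈ range n, a r - L * log n) =o[atTop] fun n => log n := by
    have := (hsum.trans_isBigO isEquivalent_harmonic_log.isBigO).add
      (isEquivalent_harmonic_log.isLittleO.const_mul_left L)
    refine this.congr_left fun n => ?_
    simp only [Pi.sub_apply]
    ring
  have := hmain.tendsto_div_nhds_zero.const_add L
  rw [add_zero] at this
  refine this.congr' ?_
  filter_upwards [eventually_gt_atTop 1] with n hn
  have : log n ≠ 0 := (log_pos (by exact_mod_cast hn)).ne'
  field_simp
  ring

theorem tendsto_sum_range_sub_mul_div_mul_log_of_tendsto_mul {a : ℕ → ℝ} {L : ℝ}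
    (h : Tendsto (fun r : ℕ => r * a r) atTop (𝓝 L)) :
    Tendsto (fun n : ℕ => (∑ r ∈ range n, ((n : ℝ) - r) * a r) / (n * log n))
      atTop (𝓝 L) := by
  have hlog : Tendsto (fun n : ℕ => (log n)⁻¹) atTop (𝓝 0) :=
    tendsto_inv_atTop_zero.comp tendsto_log_natCast_atTop
  have := (tendsto_sum_range_div_log_of_tendsto_mul h).sub (h.cesaro.mul hlog)
  rw [mul_zero, sub_zero] at this
  refine this.congr' ?_
  filter_upwards [eventually_gt_atTop 1] with n hn
  have : log n ≠ 0 := (log_pos (by exact_mod_cast hn)).ne'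
  have : (n : ℝ) ≠ 0 := by positivity
  simp only [sub_mul, sum_sub_distrib, ← mul_sum]
  field_simp

theorem cube_add_cube_sub_two_mul_cube_mul {R : Type*} [CommRing R] {u v w s : R}
    (hu : u ^ 2 = v ^ 2 + s) (hw : w ^ 2 = v ^ 2 - s) :
    (u ^ 3 + w ^ 3 - 2 * v ^ 3) * ((u + v) * (v + w) * (w + u))
      = 2 * s ^ 2 * (u * v + v * w + w * u) := by
  linear_combination
    (s * (v * (w + u) + u * w) + (u ^ 2 + u * v + v ^ 2) * (v + w) * (w + u)) * hu +
    (-s * (v * (w + u)) - s * u * w + (v ^ 2 + v * w + w ^ 2) * (u + v) * (w + u)) * hw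

theorem rpow_three_div_two_eq_sqrt_pow {x : ℝ} (hx : 0 ≤ x) : x ^ ((3 : ℝ) / 2) = √x ^ 3 := by
  rw [sqrt_eq_rpow, ← rpow_natCast, ← rpow_mul hx]
  norm_num

theorem rho34_zero : rho34 0 = 1 := by
  norm_num [rho34]

theorem rho34_even : rho34.Even := by
  intro r
  simp only [rho34, Int.cast_neg, abs_neg]
  rw [show -(r : ℝ) + 1 = -(r - 1) by ring, show -(r : ℝ) - 1 = -(r + 1) by ring,
    abs_neg, abs_neg]
  ring

noncomputable def rho34Profile (t : ℝ) : ℝ :=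
  (√(1 + t) + √(1 - t) + √(1 + t) * √(1 - t)) /
    ((√(1 + t) + 1) * (1 + √(1 - t)) * (√(1 - t) + √(1 + t)))

theorem sqrt_mul_rho34_natCast {r : ℕ} (hr : 1 ≤ r) :
    √r * rho34 r = rho34Profile (r : ℝ)⁻¹ := by
  have hr1 : (1 : ℝ) ≤ r := by exact_mod_cast hr
  set t := (r : ℝ)⁻¹
  have hrt : (r : ℝ) * t = 1 := mul_inv_cancel₀ (by positivity)
  have ht0 : 0 ≤ t := by positivity
  have ht1 : t ≤ 1 := inv_le_one_of_one_le₀ hr1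
  set v := √(r : ℝ) with hv_def
  set p := √(1 + t) with hp_def
  set q := √(1 - t) with hq_def
  have hv : v ^ 2 = r := sq_sqrt (by positivity)
  have hp : p ^ 2 = 1 + t := sq_sqrt (by positivity)
  have hq : q ^ 2 = 1 - t := sq_sqrt (by linarith)
  have hp0 : 0 < p := sqrt_pos.2 (by linarith)
  have hq0 : 0 ≤ q := sqrt_nonneg _
  clear_value v p q t
  have hsplit {c : ℝ} (hc : 0 ≤ 1 + c * t) :
      |(r : ℝ) + c| ^ ((3 : ℝ) / 2) = v ^ 3 * √(1 + c * t) ^ 3 := by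
    have : (r : ℝ) + c = r * (1 + c * t) := by linear_combination (-c) * hrt
    rw [this, abs_of_nonneg (by positivity), rpow_three_div_two_eq_sqrt_pow (by positivity),
      sqrt_mul (by positivity), ← hv_def, mul_pow]
  have hρ : rho34 r = v ^ 3 * (p ^ 3 + q ^ 3 - 2) / 2 := by
    have h1 := hsplit (c := 1) (by linarith)
    have h2 := hsplit (c := -1) (by linarith)
    have h0 := hsplit (c := 0) (by simp)
    simp only [one_mul, neg_one_mul, ← sub_eq_add_neg, zero_mul, add_zero, sqrt_one] at h1 h2 h0
    rw [rho34, Int.cast_natCast, h1, h2, h0, ← hp_def, ← hq_def]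
    ring
  have key := cube_add_cube_sub_two_mul_cube_mul (v := (1 : ℝ))
    (hp.trans (by ring)) (hq.trans (by ring))
  have hD : 0 < (p + 1) * (1 + q) * (q + p) := by positivity
  rw [rho34Profile, ← hp_def, ← hq_def, eq_div_iff hD.ne', hρ]
  linear_combination v ^ 4 / 2 * key + (p + q + q * p) * (v ^ 2 * t + 1) * (t * hv + hrt)

theorem continuousAt_rho34Profile_zero : ContinuousAt rho34Profile 0 := by
  unfold rho34Profile
  exact ContinuousAt.div (by fun_prop) (by fun_prop) (by norm_num)

theorem tendsto_natCast_mul_rho34_sq :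
    Tendsto (fun r : ℕ => (r : ℝ) * rho34 r ^ 2) atTop (𝓝 (9 / 64)) := by
  have hprofile : Tendsto (fun r : ℕ => rho34Profile (r : ℝ)⁻¹) atTop (𝓝 (3 / 8)) := by
    have := continuousAt_rho34Profile_zero.tendsto.comp
      (tendsto_inv_atTop_zero.comp tendsto_natCast_atTop_atTop)
    norm_num [rho34Profile] at this
    exact this
  rw [show (9 / 64 : ℝ) = (3 / 8) ^ 2 by norm_num]
  refine (hprofile.pow 2).congr' ?_
  filter_upwards [eventually_ge_atTop 1] with r hr
  rw [← sqrt_mul_rho34_natCast hr, mul_pow, sq_sqrt (Nat.cast_nonneg r)]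

theorem variance_asymptotics_H_three_quarters :
    Tendsto
      (fun n : ℕ =>
        (2 * ∑ k ∈ Finset.range n, ∑ l ∈ Finset.range n, rho34 ((k : ℤ) - (l : ℤ)) ^ 2)
          / ((n : ℝ) * Real.log n))
      atTop (nhds (9 / 16)) := by
  have hρ := tendsto_sum_range_sub_mul_div_mul_log_of_tendsto_mul tendsto_natCast_mul_rho34_sq
  have hlog := tendsto_inv_atTop_zero.comp tendsto_log_natCast_atTop
  rw [show (9 / 16 : ℝ) = 4 * (9 / 64) - 2 * 0 by norm_num]
  refine ((hρ.const_mul 4).sub (hlog.const_mul 2)).congr' ?_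
  filter_upwards [eventually_gt_atTop 1] with n hn
  have : log n ≠ 0 := (log_pos (by exact_mod_cast hn)).ne'
  have : (n : ℝ) ≠ 0 := by positivity
  rw [sum_range_sum_range_sub_of_even (f := fun z => rho34 z ^ 2)
    (fun z => by simp only [rho34_even z])]
  simp only [Function.comp_apply, rho34_zero]
  field_simp
  ring
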